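/- Let q be a prime power and A, B ⊆ F_q with B symmetric (B = -B) and |A||B| > q. Then 8AB = F_q, i.e., every element of F_q can be written as a sum of 8 products a·b with a ∈ A, b ∈ B. -/

import Mathlib

open Pointwise Finset
open scoped Combinatorics.Additive

/-!
Cauchy–Schwarz gives `|A|²|B|² ≤ |A + ξB| · E(A, ξB)`. A quadruple `(a₁, a₂, b₁, b₂)` with
`b₁ ≠ b₂` solves `a₁ + ξb₁ = a₂ + ξb₂` for at most one `ξ`, so averaging over `ξ ≠ 0` yields a
`ξ ≠ 0` with `|A + ξB| > q/2`. Pigeonhole on `(a, b) ↦ a - ξb` gives `a₁ - a₂ = ξ(b₁ - b₂)` with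
`b₁ ≠ b₂`. Then `S = (b₁ - b₂)(A + ξB)` has more than `q/2` elements, so `S + S = F`, and as
`B = -B` every element `(b₁ - b₂)(a + ξb) = ab₁ + a(-b₂) + a₁b + a₂(-b)` of `S` lies in `4AB`.
-/

-- `S = |A + ξB|` and `m` is the off-diagonal part of `E(A, ξB)`, for the `ξ` chosen by averaging.
theorem Nat.lt_two_mul_of_energy_bound {a b q S m : ℕ} (hq : 2 ≤ q) (hb : b ≤ q)
    (hab : q < a * b) (hS : (a * b) ^ 2 ≤ S * (a * b + m))
    (hm : (q - 1) * m ≤ a ^ 2 * (b * b - b)) :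
    q < 2 * S := by
  obtain ⟨k, rfl⟩ : ∃ k, q = k + 1 := ⟨q - 1, by omega⟩
  rw [Nat.add_sub_cancel] at hm
  by_contra! hSq
  have ha : 2 ≤ a := by
    by_contra!
    interval_cases a <;> omega
  zify [Nat.le_mul_self b] at *
  set N : ℤ := a * b
  have hN : 0 < N := by omega
  have hdouble : 2 * k * N ^ 2 ≤ (k + 1) * (k * N + N ^ 2 - a * N) := by
    nlinarith [mul_le_mul_of_nonneg_left hS (by positivity : (0 : ℤ) ≤ 2 * k),
      mul_le_mul_of_nonneg_right hSq (by positivity : (0 : ℤ) ≤ k * (N + m))]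
  have hsingle : 2 * k * N ≤ (k + 1) * (k + N - a) :=
    le_of_mul_le_mul_right (by linear_combination hdouble) hN
  nlinarith

namespace Finset

theorem add_eq_univ_of_card_lt_card_add_card {α : Type*} [AddGroup α] [Fintype α]
    [DecidableEq α] {s t : Finset α} (h : Fintype.card α < #s + #t) : s + t = univ := by
  refine eq_univ_of_forall fun x => ?_
  have hcard : #(t.image (x - ·)) = #t := card_image_of_injective _ sub_right_injective
  obtain ⟨a, ha⟩ := inter_nonempty_of_card_lt_card_add_card (subset_univ s)
    (subset_univ (t.image (x - ·))) (by rwa [card_univ, hcard])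
  obtain ⟨has, b, hb, rfl⟩ := by simpa only [mem_inter, mem_image] using ha
  exact mem_add.2 ⟨x - b, has, b, hb, sub_add_cancel x b⟩

section Ring

variable {R : Type*} [CommRing R]

theorem exists_sub_eq_mul_sub [Fintype R] {A B : Finset R}
    (h : Fintype.card R < #A * #B) (ξ : R) :
    ∃ a₁ ∈ A, ∃ a₂ ∈ A, ∃ b₁ ∈ B, ∃ b₂ ∈ B, b₁ ≠ b₂ ∧ a₁ - a₂ = ξ * (b₁ - b₂) := by
  obtain ⟨⟨a₁, b₁⟩, h₁, ⟨a₂, b₂⟩, h₂, hne, heq⟩ :=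
    exists_ne_map_eq_of_card_lt_of_maps_to (t := univ) (f := fun p : R × R => p.1 - ξ * p.2)
      (by rwa [card_univ, card_product]) (fun _ _ => mem_coe.2 (mem_univ _))
  rw [mem_product] at h₁ h₂
  refine ⟨a₁, h₁.1, a₂, h₂.1, b₁, h₁.2, b₂, h₂.2, fun hb => hne ?_, by linear_combination heq⟩
  subst hb
  simpa using heq

theorem smul_add_smul_finset_subset_four_nsmul_mul [DecidableEq R] {A B : Finset R} (hB : -B = B)
    {ξ a₁ a₂ b₁ b₂ : R} (ha₁ : a₁ ∈ A) (ha₂ : a₂ ∈ A) (hb₁ : b₁ ∈ B) (hb₂ : b₂ ∈ B)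
    (h : a₁ - a₂ = ξ * (b₁ - b₂)) :
    (b₁ - b₂) • (A + ξ • B) ⊆ 4 • (A * B) := by
  have neg_mem {b : R} (hb : b ∈ B) : -b ∈ B := hB ▸ neg_mem_neg hb
  intro y hy
  obtain ⟨_, hz, rfl⟩ := mem_smul_finset.1 hy
  obtain ⟨a, ha, _, hc, rfl⟩ := mem_add.1 hz
  obtain ⟨b, hb, rfl⟩ := mem_smul_finset.1 hc
  rw [show (4 : ℕ) = 1 + 1 + 1 + 1 from rfl, add_nsmul, add_nsmul, add_nsmul, one_nsmul]
  convert add_mem_add (add_mem_add (add_mem_add (mul_mem_mul ha hb₁)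
    (mul_mem_mul ha (neg_mem hb₂))) (mul_mem_mul ha₁ hb)) (mul_mem_mul ha₂ (neg_mem hb)) using 1
  simp only [smul_eq_mul]
  linear_combination (-b) * h

end Ring

section Field

variable {F : Type*} [Field F] [DecidableEq F]

theorem addEnergy_smul_finset (s t : Finset F) {ξ : F} (hξ : ξ ≠ 0) :
    E[s, ξ • t] = #{x ∈ (s ×ˢ s) ×ˢ t ×ˢ t | x.1.1 + ξ * x.2.1 = x.1.2 + ξ * x.2.2} := by
  symm
  refine card_nbij' (fun x => (x.1, ξ * x.2.1, ξ * x.2.2))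
    (fun x => (x.1, ξ⁻¹ * x.2.1, ξ⁻¹ * x.2.2)) ?_ ?_ ?_ ?_
  · rintro ⟨a, b₁, b₂⟩ hx
    simp only [mem_coe, mem_filter, mem_product, mem_smul_finset, smul_eq_mul] at hx ⊢
    exact ⟨⟨hx.1.1, ⟨b₁, hx.1.2.1, rfl⟩, ⟨b₂, hx.1.2.2, rfl⟩⟩, hx.2⟩
  · rintro ⟨a, c₁, c₂⟩ hx
    simp only [mem_coe, mem_filter, mem_product, mem_smul_finset, smul_eq_mul] at hx ⊢
    obtain ⟨⟨hs, ⟨b₁, hb₁, rfl⟩, ⟨b₂, hb₂, rfl⟩⟩, heq⟩ := hx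
    simp only [inv_mul_cancel_left₀ hξ]
    exact ⟨⟨hs, hb₁, hb₂⟩, heq⟩
  · intro x _
    simp [inv_mul_cancel_left₀ hξ]
  · intro x _
    simp [mul_inv_cancel_left₀ hξ]

theorem addEnergy_smul_finset_le (s t : Finset F) {ξ : F} (hξ : ξ ≠ 0) :
    E[s, ξ • t] ≤
      #s * #t + #{x ∈ (s ×ˢ s) ×ˢ t.offDiag | x.1.1 + ξ * x.2.1 = x.1.2 + ξ * x.2.2} := by
  rw [addEnergy_smul_finset s t hξ, ← diag_card s, ← diag_card t, ← card_product]
  refine (card_le_card fun x hx => ?_).trans (card_union_le _ _)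
  obtain ⟨⟨a₁, a₂⟩, b₁, b₂⟩ := x
  simp only [mem_filter, mem_product, mem_diag, mem_offDiag, mem_union] at hx ⊢
  obtain ⟨⟨⟨ha₁, ha₂⟩, hb₁, hb₂⟩, heq⟩ := hx
  by_cases hb : b₁ = b₂
  · subst hb
    exact Or.inl ⟨⟨ha₁, add_right_cancel heq⟩, hb₁, rfl⟩
  · exact Or.inr ⟨⟨⟨ha₁, ha₂⟩, hb₁, hb₂, hb⟩, heq⟩

theorem sum_card_filter_add_mul_eq_le [Fintype F] (s t : Finset F) :
    ∑ ξ, #{x ∈ (s ×ˢ s) ×ˢ t.offDiag | x.1.1 + ξ * x.2.1 = x.1.2 + ξ * x.2.2} ≤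
      #s ^ 2 * #t.offDiag := by
  calc _ = ∑ x ∈ (s ×ˢ s) ×ˢ t.offDiag, #{ξ | x.1.1 + ξ * x.2.1 = x.1.2 + ξ * x.2.2} := by
        simp only [card_filter]
        exact sum_comm
    _ ≤ ∑ x ∈ (s ×ˢ s) ×ˢ t.offDiag, 1 := by
        refine sum_le_sum fun x hx => card_le_one.2 fun ξ hξ ξ' hξ' => ?_
        simp only [mem_filter, mem_univ, true_and] at hξ hξ'
        have hb : x.2.1 - x.2.2 ≠ 0 := sub_ne_zero.2 (mem_offDiag.1 (mem_product.1 hx).2).2.2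
        have : (ξ - ξ') * (x.2.1 - x.2.2) = 0 := by linear_combination hξ - hξ'
        exact sub_eq_zero.1 ((mul_eq_zero.1 this).resolve_right hb)
    _ = #s ^ 2 * #t.offDiag := by
        rw [sum_const, card_product, card_product, smul_eq_mul, mul_one, sq]

theorem exists_ne_zero_card_add_smul_finset_gt [Fintype F] {A B : Finset F}
    (h : Fintype.card F < #A * #B) : ∃ ξ ≠ (0 : F), Fintype.card F < 2 * #(A + ξ • B) := by
  set q := Fintype.card F
  set m : F → ℕ := fun ξ => #{x ∈ (A ×ˢ A) ×ˢ B.offDiag | x.1.1 + ξ * x.2.1 = x.1.2 + ξ * x.2.2}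
  have hq : 2 ≤ q := Fintype.one_lt_card
  have hunits : #(univ.erase (0 : F)) = q - 1 := by rw [card_erase_of_mem (mem_univ _), card_univ]
  obtain ⟨ξ, hξ, hm⟩ : ∃ ξ ∈ univ.erase (0 : F), (q - 1) * m ξ ≤ #A ^ 2 * #B.offDiag := by
    refine exists_le_of_sum_le ⟨1, by simp⟩ ?_
    rw [← mul_sum, sum_const, hunits, smul_eq_mul]
    exact Nat.mul_le_mul_left _
      ((sum_le_sum_of_subset (erase_subset _ _)).trans (sum_card_filter_add_mul_eq_le A B))
  have hξ : ξ ≠ 0 := ne_of_mem_erase hξ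
  have hS : (#A * #B) ^ 2 ≤ #(A + ξ • B) * (#A * #B + m ξ) :=
    calc (#A * #B) ^ 2 = #A ^ 2 * #(ξ • B) ^ 2 := by rw [card_smul_finset₀ hξ, mul_pow]
      _ ≤ #(A + ξ • B) * E[A, ξ • B] := le_card_add_mul_addEnergy _ _
      _ ≤ #(A + ξ • B) * (#A * #B + m ξ) := by gcongr; exact addEnergy_smul_finset_le A B hξ
  rw [offDiag_card] at hm
  exact ⟨ξ, hξ, Nat.lt_two_mul_of_energy_bound hq (card_le_univ B) h hS hm⟩

theorem eight_nsmul_mul_eq_univ [Fintype F] {A B : Finset F} (hB : -B = B)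
    (h : Fintype.card F < #A * #B) : 8 • (A * B) = univ := by
  obtain ⟨ξ, hξ, hlarge⟩ := exists_ne_zero_card_add_smul_finset_gt h
  obtain ⟨a₁, ha₁, a₂, ha₂, b₁, hb₁, b₂, hb₂, hne, hcoll⟩ := exists_sub_eq_mul_sub h ξ
  set S := (b₁ - b₂) • (A + ξ • B)
  have hcard : #S = #(A + ξ • B) := card_smul_finset₀ (sub_ne_zero.2 hne) _
  have hSS : S + S = univ := add_eq_univ_of_card_lt_card_add_card (by omega)
  have hS : S ⊆ 4 • (A * B) :=
    smul_add_smul_finset_subset_four_nsmul_mul hB ha₁ ha₂ hb₁ hb₂ hcoll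
  refine eq_univ_of_forall fun x => ?_
  rw [show (8 : ℕ) = 4 + 4 from rfl, add_nsmul]
  exact add_subset_add hS hS (hSS ▸ mem_univ x)

end Field

end Finset

theorem stmt_12 {F : Type*} [Field F] [Fintype F]
    (A B : Set F) (hB : B = -B)
    (h : A.ncard * B.ncard > Fintype.card F) :
    ∀ x : F, ∃ a : Fin 8 → F, ∃ b : Fin 8 → F,
      (∀ i, a i ∈ A ∧ b i ∈ B) ∧ x = ∑ i, a i * b i := by
  classical
  intro x
  obtain ⟨A, rfl⟩ := A.toFinite.exists_finset_coe
  obtain ⟨B, rfl⟩ := B.toFinite.exists_finset_coe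
  rw [Set.ncard_coe_finset, Set.ncard_coe_finset] at h
  have hx : x ∈ ((8 • (A * B) : Finset F) : Set F) := by
    rw [eight_nsmul_mul_eq_univ (by rw [← coe_inj, coe_neg]; exact hB.symm) h, coe_univ]
    exact Set.mem_univ x
  rw [coe_nsmul, coe_mul, Set.mem_nsmul_iff_sum] at hx
  obtain ⟨f, hf, rfl⟩ := hx
  choose a ha b hb hab using fun i => Set.mem_mul.1 (hf i)
  exact ⟨a, b, fun i => ⟨ha i, hb i⟩, by simp only [hab]⟩
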